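/- Fix i with ∑_j a_{ij} ≥ b_i and set u = (b_i − ∑_j a_{ij})/n + 1. Then u ∈ [0,1], the constant vector (u,...,u) satisfies the i-th inequality ∑_j T_L(a_{ij}, u) ≥ b_i, and the set J(u) = {j : u ≥ 1 − a_{ij}} is nonempty. Furthermore, (u,...,u) is the unique optimal solution of the single-constraint minimax problem (minimize y over y ∈ [0,1] with ∑_j T_L(a_{ij}, y) ≥ b_i) if and only if ∑_{j ∈ J(u)} T_L(a_{ij}, u) = b_i. -/

import Mathlib

open Finset

noncomputable section

/-- Łukasiewicz t-norm. -/
def TL (a x : ℝ) : ℝ := max (a + x - 1) 0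

/-- Solution set of the addition-Łukasiewicz system. -/
def Sset {m n : ℕ} (A : Fin m → Fin n → ℝ) (b : Fin m → ℝ) : Set (Fin n → ℝ) :=
  {x | (∀ j, x j ∈ Set.Icc (0:ℝ) 1) ∧ ∀ i, b i ≤ ∑ j, TL (A i j) (x j)}

/-- Minimal solution. -/
def IsMinimalSol {m n : ℕ} (A : Fin m → Fin n → ℝ) (b : Fin m → ℝ) (x : Fin n → ℝ) : Prop :=
  x ∈ Sset A b ∧ ∀ y ∈ Sset A b, y ≤ x → y = x

/-- The set F_j(z). -/
def Fset {m n : ℕ} (A : Fin m → Fin n → ℝ) (b : Fin m → ℝ) (j : Fin n) (z : Fin n → ℝ) :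
    Set ℝ :=
  {t | t ∈ Set.Icc (0:ℝ) 1 ∧
    ∀ i, b i ≤ TL (A i j) t + ∑ k ∈ Finset.univ.erase j, TL (A i k) (z k)}

/-- Objective Z(x) = max_j x_j. -/
def Zf {n : ℕ} (x : Fin n → ℝ) : ℝ := ⨆ j, x j

/-- Optimal solution of the minimax problem. -/
def IsOptimal {m n : ℕ} (A : Fin m → Fin n → ℝ) (b : Fin m → ℝ) (x : Fin n → ℝ) : Prop :=
  x ∈ Sset A b ∧ ∀ y ∈ Sset A b, Zf x ≤ Zf y

/-! With this `u` the affine parts `a j + u - 1` add up to exactly `b`, so `u` is feasible, and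
`y ↦ ∑ j, TL (a j) y` is continuous and strictly increasing wherever it is positive. Hence `u` is
the least feasible point exactly when the constraint is tight at `u`; restricting the sum to
`J(u)` only drops zero terms. -/

section TL

variable (a : ℝ) {x y : ℝ}

lemma le_TL : a + x - 1 ≤ TL a x := le_max_left _ _

lemma TL_eq_zero_of_le_one_sub (h : x ≤ 1 - a) : TL a x = 0 :=
  max_eq_right (by linarith)

lemma TL_eq_of_one_sub_lt (h : 1 - a < x) : TL a x = a + x - 1 :=
  max_eq_left (by linarith)

lemma continuous_TL : Continuous (TL a) := by
  unfold TL
  fun_prop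

lemma TL_lt_TL (hxy : y < x) (hx : 0 < TL a x) : TL a y < TL a x := by
  have hax : 1 - a < x := by
    by_contra! h
    exact hx.ne' (TL_eq_zero_of_le_one_sub a h)
  rw [TL_eq_of_one_sub_lt a hax] at hx ⊢
  exact max_lt (by linarith) hx

lemma TL_mono : Monotone (TL a) := fun _ _ h => max_le_max (by linarith) le_rfl

end TL

section SumTL

variable {ι : Type*} [Fintype ι] (a : ι → ℝ)

lemma sum_filter_TL_eq (u : ℝ) :
    ∑ j ∈ univ.filter (fun j => 1 - a j ≤ u), TL (a j) u = ∑ j, TL (a j) u :=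
  sum_filter_of_ne fun j _ h => by
    by_contra! hj
    exact h (TL_eq_zero_of_le_one_sub _ hj.le)

lemma sum_TL_lt_sum_TL {x y : ℝ} (hxy : y < x) (hx : 0 < ∑ j, TL (a j) x) :
    ∑ j, TL (a j) y < ∑ j, TL (a j) x := by
  obtain ⟨j, -, hj⟩ := exists_lt_of_sum_lt (s := univ) (f := fun _ => (0:ℝ)) (by simpa using hx)
  exact sum_lt_sum (fun k _ => TL_mono _ hxy.le) ⟨j, mem_univ _, TL_lt_TL _ hxy hj⟩

variable {b : ℝ}

lemma sum_add_div_card_eq (hι : Fintype.card ι ≠ 0) :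
    ∑ j, (a j + ((b - ∑ j, a j) / Fintype.card ι + 1) - 1) = b := by
  simp only [add_sub_assoc, sum_add_distrib, sum_const, card_univ, nsmul_eq_mul]
  field_simp
  ring

lemma div_card_add_one_mem_Ioc (hι : Fintype.card ι ≠ 0) (ha : ∀ j, a j ≤ 1) (hb : 0 < b) (hfeas : b ≤ ∑ j, a j) :
    (b - ∑ j, a j) / Fintype.card ι + 1 ∈ Set.Ioc 0 1 := by
  have hcard : (0:ℝ) < Fintype.card ι := by positivity
  have hsum_le : ∑ j, a j ≤ Fintype.card ι := by
    simpa using sum_le_sum (s := univ) fun j _ => ha j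
  constructor
  · have : (-1:ℝ) < (b - ∑ j, a j) / Fintype.card ι := by
      rw [lt_div_iff₀ hcard]
      linarith
    linarith
  · have := div_nonpos_of_nonpos_of_nonneg (by linarith : b - ∑ j, a j ≤ 0) hcard.le
    linarith

end SumTL

section Superlevel

variable {f : ℝ → ℝ} {b u : ℝ}

lemma apply_eq_of_isLeast_superlevel (hf : ContinuousAt f u) (hu : 0 < u)
    (h : IsLeast {y ∈ Set.Icc (0:ℝ) 1 | b ≤ f y} u) : f u = b := by
  refine le_antisymm ?_ h.1.2
  by_contra! hbu
  have hnear : ∀ᶠ y in nhdsWithin u (Set.Iio u), (0 < y ∧ b < f y) ∧ y < u :=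
    (((eventually_gt_nhds hu).and (hf.eventually (eventually_gt_nhds hbu))).filter_mono
      nhdsWithin_le_nhds).and self_mem_nhdsWithin
  obtain ⟨y, ⟨hy0, hby⟩, hyu⟩ := hnear.exists
  exact (h.2 ⟨⟨hy0.le, by linarith [h.1.1.2]⟩, hby.le⟩).not_gt hyu

lemma isLeast_superlevel_of_apply_eq (hf : ∀ y < u, f y < f u) (hu : u ∈ Set.Icc (0:ℝ) 1)
    (h : f u = b) : IsLeast {y ∈ Set.Icc (0:ℝ) 1 | b ≤ f y} u :=
  ⟨⟨hu, h.ge⟩, fun y hy => by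
    by_contra! hyu
    exact (hf y hyu).not_ge (h ▸ hy.2)⟩

end Superlevel

theorem stmt18_general {n : ℕ} (a : Fin n → ℝ) (b : ℝ)
    (ha : ∀ j, a j ∈ Set.Icc (0:ℝ) 1) (hb : 0 < b)
    (hfeas : b ≤ ∑ j, a j)
    (u : ℝ) (hu : u = (b - ∑ j, a j) / n + 1) :
    u ∈ Set.Icc (0:ℝ) 1 ∧
      b ≤ ∑ j, TL (a j) u ∧
      {j : Fin n | 1 - a j ≤ u}.Nonempty ∧
      (IsLeast {y ∈ Set.Icc (0:ℝ) 1 | b ≤ ∑ j, TL (a j) y} u ↔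
        ∑ j ∈ Finset.univ.filter (fun j => 1 - a j ≤ u), TL (a j) u = b) := by
  have hn : n ≠ 0 := by
    rintro rfl
    simp at hfeas
    linarith
  have hι : Fintype.card (Fin n) ≠ 0 := by simpa using hn
  obtain ⟨hu0, hu1⟩ : u ∈ Set.Ioc 0 1 := by
    simpa [hu] using div_card_add_one_mem_Ioc a hι (fun j => (ha j).2) hb hfeas
  have hsum : ∑ j, (a j + u - 1) = b := by
    simpa [hu] using sum_add_div_card_eq a (b := b) hι
  have hbu : b ≤ ∑ j, TL (a j) u := hsum ▸ sum_le_sum fun j _ => le_TL _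
  rw [sum_filter_TL_eq]
  refine ⟨⟨hu0.le, hu1⟩, hbu, ?_, ⟨apply_eq_of_isLeast_superlevel ?_ hu0,
    isLeast_superlevel_of_apply_eq (fun y hy => sum_TL_lt_sum_TL a hy ?_) ⟨hu0.le, hu1⟩⟩⟩
  · obtain ⟨j, hj⟩ := nonempty_of_sum_ne_zero
      (((sum_filter_TL_eq a u).trans_ge hbu).trans_lt' hb).ne'
    exact ⟨j, (mem_filter.1 hj).2⟩
  · exact (continuous_finsetSum _ fun j _ => continuous_TL (a j)).continuousAt
  · linarith

theorem stmt18 {n : ℕ} (hn : 0 < n) (a : Fin n → ℝ) (b : ℝ)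
    (ha : ∀ j, a j ∈ Set.Icc (0:ℝ) 1) (hb : 0 < b)
    (hfeas : b ≤ ∑ j, a j)
    (u : ℝ) (hu : u = (b - ∑ j, a j) / n + 1) :
    u ∈ Set.Icc (0:ℝ) 1 ∧
      b ≤ ∑ j, TL (a j) u ∧
      {j : Fin n | 1 - a j ≤ u}.Nonempty ∧
      (IsLeast {y ∈ Set.Icc (0:ℝ) 1 | b ≤ ∑ j, TL (a j) y} u ↔
        ∑ j ∈ Finset.univ.filter (fun j => 1 - a j ≤ u), TL (a j) u = b) :=
  stmt18_general a b ha hb hfeas u hu
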